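/- arXiv:1308.5492 — 2 statements merged into one kernel-verified Lean document; each statement's English description precedes it below -/
import Mathlib

section
/- Let p be an odd prime and h an integer. Then 𝐁(p,h) = −(p+1)² if p ≡ 3 (mod 4) and p ∤ h; 𝐁(p,h) = −(p²+6p+1) − 4p(p+1)·(h/p) if p ≡ 1 (mod 4) and p ∤ h, where (h/p) is the Legendre symbol; 𝐁(p,h) = (p−1)(p+1)² if p ≡ 3 (mod 4) and p | h; and 𝐁(p,h) = (p−1)(p²+6p+1) if p ≡ 1 (mod 4) and p | h. -/
/-! For `p ∤ a`, completing `C*(p,a)` by the term `x = 0` gives `C*(p,a) = χ(a) g - 1`, where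
`χ` is the quadratic character mod `p` and `g` its Gauss sum; moreover `g² = χ(-1) p` and
`conj g = χ(-1) g`. Hence `|C*(p,a)|² = p + 1 - (1 + χ(-1)) χ(a) g`, so `|C*(p,a)|⁴` is an
affine function of `χ(a)`, and `𝐁(p,h)` follows from `∑_{a ≠ 0} e(ah/p) = p·[p ∣ h] - 1`
and `∑_a χ(a) e(ah/p) = χ(h) g`. The argument works verbatim over any finite field of odd
characteristic with any primitive additive character. -/

set_option autoImplicit false

open scoped Classical

noncomputable section

/-- `e(x) = exp(2πix)`. -/
def e (x : ℝ) : ℂ := Complex.exp (2 * Real.pi * Complex.I * x)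

/-- The Gauss-type sum `C*(q,a) = ∑_{1 ≤ m ≤ q, (m,q)=1} e(am²/q)`. -/
def Cstar (q : ℕ) (a : ℤ) : ℂ :=
  ∑ m ∈ (Finset.Icc 1 q).filter (fun m => Nat.gcd m q = 1),
    e ((a : ℝ) * (m : ℝ) ^ 2 / q)

/-- `𝐁(p,h) = ∑_{a=1}^{p−1} |C*(p,a)|⁴ e(ah/p)`. -/
def Bp (p : ℕ) (h : ℤ) : ℂ :=
  ∑ a ∈ Finset.Icc 1 (p - 1),
    ((‖Cstar p (a : ℤ)‖) ^ 4 : ℂ) * e ((a : ℝ) * (h : ℝ) / p)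

open Finset

section QuadraticGaussSum

variable {F : Type*} [Field F]

lemma MulChar.IsQuadratic.apply_sq_eq_one {χ : MulChar F ℂ} (hq : χ.IsQuadratic) {a : F}
    (ha : a ≠ 0) : χ a ^ 2 = 1 := by
  rw [← MulChar.pow_apply' χ two_ne_zero, hq.sq_eq_one, MulChar.one_apply ha.isUnit]

lemma MulChar.IsQuadratic.conj_apply {χ : MulChar F ℂ} (hq : χ.IsQuadratic) (a : F) :
    starRingEnd ℂ (χ a) = χ a := by
  rcases hq a with h | h | h <;> simp [h]

variable [Fintype F]

lemma sum_apply_sq_eq_sum_quadraticChar_smul [DecidableEq F] (hF : ringChar F ≠ 2)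
    {M : Type*} [AddCommGroup M] (f : F → M) :
    ∑ x, f (x ^ 2) = ∑ t, (quadraticChar F t + 1) • f t := by
  rw [← sum_fiberwise univ (fun x : F => x ^ 2)]
  refine sum_congr rfl fun t _ => ?_
  rw [sum_congr rfl fun x hx => congrArg f (mem_filter.mp hx).2, sum_const,
    ← quadraticChar_card_sqrts hF t, natCast_zsmul]
  congr 2
  ext
  simp

lemma ringHomComp_quadraticChar_ne_one [DecidableEq F] {R : Type*} [CommRing R] [CharZero R]
    (hF : ringChar F ≠ 2) : (quadraticChar F).ringHomComp (Int.castRingHom R) ≠ 1 :=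
  (MulChar.ringHomComp_ne_one_iff (RingHom.injective_int _)).mpr (quadraticChar_ne_one hF)

lemma gaussSum_mulShift_of_isQuadratic {R : Type*} [CommRing R] [IsDomain R] {χ : MulChar F R}
    (hχ : χ ≠ 1) (hq : χ.IsQuadratic) (ψ : AddChar F R) (b : F) :
    gaussSum χ (ψ.mulShift b) = χ b * gaussSum χ ψ := by
  rcases eq_or_ne b 0 with rfl | hb
  · rw [AddChar.mulShift_zero, gaussSum_one_right hχ, MulChar.map_zero, zero_mul]
  · simpa [hq.inv] using gaussSum_mulShift_eq χ ψ (Units.mk0 b hb)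

lemma sum_addChar_mul_sq [DecidableEq F] {R : Type*} [CommRing R] [IsDomain R] [CharZero R]
    (hF : ringChar F ≠ 2) {ψ : AddChar F R} (hψ : ψ.IsPrimitive) {a : F} (ha : a ≠ 0) :
    ∑ x, ψ (a * x ^ 2) = (quadraticChar F).ringHomComp (Int.castRingHom R) a *
      gaussSum ((quadraticChar F).ringHomComp (Int.castRingHom R)) ψ := by
  have hψa : ∑ t, ψ (a * t) = 0 := by
    simpa only [mul_comm, if_neg ha, Nat.cast_zero] using AddChar.sum_mulShift a hψ
  rw [← gaussSum_mulShift_of_isQuadratic (ringHomComp_quadraticChar_ne_one hF)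
      ((quadraticChar_isQuadratic F).comp _),
    sum_apply_sq_eq_sum_quadraticChar_smul hF (fun t => ψ (a * t))]
  simp only [add_smul, one_smul, sum_add_distrib, zsmul_eq_mul, hψa, add_zero]
  rfl

lemma sum_erase_zero_addChar_mul [DecidableEq F] {R : Type*} [CommRing R] [IsDomain R]
    {ψ : AddChar F R} (hψ : ψ.IsPrimitive) (h : F) :
    ∑ a ∈ univ.erase 0, ψ (a * h) = (if h = 0 then (Fintype.card F : R) else 0) - 1 := by
  rw [sum_erase_eq_sub (mem_univ 0), AddChar.sum_mulShift h hψ, zero_mul, AddChar.map_zero_eq_one]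
  split_ifs <;> simp

lemma MulChar.IsQuadratic.conj_gaussSum {χ : MulChar F ℂ} (hq : χ.IsQuadratic)
    (ψ : AddChar F ℂ) : starRingEnd ℂ (gaussSum χ ψ) = χ (-1) * gaussSum χ ψ := by
  rw [starRingEnd_apply, star_gaussSum_eq, hq.inv, AddChar.inv_mulShift]
  simpa [hq.inv] using gaussSum_mulShift_eq χ ψ (-1)

lemma ofReal_norm_mul_gaussSum_sub_one_pow_four {χ : MulChar F ℂ} (hχ : χ ≠ 1)
    (hq : χ.IsQuadratic) {ψ : AddChar F ℂ} (hψ : ψ.IsPrimitive) {a : F} (ha : a ≠ 0) :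
    (‖χ a * gaussSum χ ψ - 1‖ : ℂ) ^ 4 =
      (Fintype.card F + 1) ^ 2 + 2 * (1 + χ (-1)) * Fintype.card F
        - 2 * (Fintype.card F + 1) * (1 + χ (-1)) * gaussSum χ ψ * χ a := by
  have hg := gaussSum_sq hχ hq hψ
  have hε := hq.apply_sq_eq_one (neg_ne_zero.mpr one_ne_zero)
  have hχa := hq.apply_sq_eq_one ha
  have hnorm_sq : (‖χ a * gaussSum χ ψ - 1‖ : ℂ) ^ 2 =
      Fintype.card F + 1 - (1 + χ (-1)) * χ a * gaussSum χ ψ := by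
    rw [← Complex.mul_conj', map_sub, map_mul, map_one, hq.conj_apply, hq.conj_gaussSum]
    linear_combination (χ (-1) * gaussSum χ ψ ^ 2) * hχa + χ (-1) * hg
      + (Fintype.card F : ℂ) * hε
  rw [show 4 = 2 * 2 from rfl, pow_mul, hnorm_sq]
  linear_combination ((1 + χ (-1)) ^ 2 * gaussSum χ ψ ^ 2) * hχa + (1 + χ (-1)) ^ 2 * hg
    + (2 + χ (-1)) * (Fintype.card F : ℂ) * hε

theorem sum_erase_zero_norm_pow_four_mul_addChar [DecidableEq F] (hF : ringChar F ≠ 2)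
    {ψ : AddChar F ℂ} (hψ : ψ.IsPrimitive) (h : F) :
    ∑ a ∈ univ.erase 0, (‖∑ x, ψ (a * x ^ 2) - 1‖ : ℂ) ^ 4 * ψ (a * h) =
      ((Fintype.card F + 1) ^ 2 + 2 * (1 + quadraticChar F (-1)) * Fintype.card F)
          * ((if h = 0 then (Fintype.card F : ℂ) else 0) - 1)
        - 2 * (1 + quadraticChar F (-1)) * Fintype.card F * (Fintype.card F + 1)
          * quadraticChar F h := by
  set χ := (quadraticChar F).ringHomComp (Int.castRingHom ℂ)
  simp only [show ∀ x, (quadraticChar F x : ℂ) = χ x from fun _ => rfl]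
  have hχ : χ ≠ 1 := ringHomComp_quadraticChar_ne_one hF
  have hq : χ.IsQuadratic := (quadraticChar_isQuadratic F).comp _
  have hterm : ∀ a ∈ univ.erase 0, (‖∑ x, ψ (a * x ^ 2) - 1‖ : ℂ) ^ 4 * ψ (a * h) =
      ((Fintype.card F + 1) ^ 2 + 2 * (1 + χ (-1)) * Fintype.card F) * ψ (a * h)
        - 2 * (Fintype.card F + 1) * (1 + χ (-1)) * gaussSum χ ψ * (χ a * ψ (a * h)) := by
    intro a ha
    rw [sum_addChar_mul_sq hF hψ (ne_of_mem_erase ha),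
      ofReal_norm_mul_gaussSum_sub_one_pow_four hχ hq hψ (ne_of_mem_erase ha)]
    ring
  have hχsum : ∑ a ∈ univ.erase 0, χ a * ψ (a * h) = χ h * gaussSum χ ψ := by
    rw [sum_erase_eq_sub (mem_univ 0), MulChar.map_zero, zero_mul, sub_zero,
      ← gaussSum_mulShift_of_isQuadratic hχ hq]
    simp only [gaussSum, AddChar.mulShift_apply, mul_comm h]
  rw [sum_congr rfl hterm, sum_sub_distrib, ← mul_sum, ← mul_sum,
    sum_erase_zero_addChar_mul hψ, hχsum]
  linear_combination (-2 * (Fintype.card F + 1) * (1 + χ (-1)) * χ h) * gaussSum_sq hχ hq hψ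
    + (-2 * (Fintype.card F + 1) * Fintype.card F * χ h) *
      hq.apply_sq_eq_one (neg_ne_zero.mpr one_ne_zero)

end QuadraticGaussSum

lemma e_intCast_div (n : ℕ) [NeZero n] (j : ℤ) :
    e (j / n) = ZMod.stdAddChar (j : ZMod n) := by
  rw [ZMod.stdAddChar_coe, e]
  push_cast
  ring_nf

lemma sum_Icc_natCast_eq_sum_erase_zero {M : Type*} [AddCommMonoid M] (n : ℕ) [NeZero n]
    (f : ZMod n → M) : ∑ m ∈ Icc 1 (n - 1), f m = ∑ x ∈ univ.erase 0, f x := by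
  have hn : 0 < n := Nat.pos_of_neZero n
  refine sum_nbij' (fun m => (m : ZMod n)) ZMod.val (fun m hm => ?_) (fun x hx => ?_)
    (fun m hm => ?_) (fun x _ => ZMod.natCast_zmod_val x) (fun _ _ => rfl)
  · rw [mem_Icc] at hm
    rw [mem_erase, Ne, ZMod.natCast_eq_zero_iff]
    exact ⟨fun hd => absurd (Nat.le_of_dvd (by omega) hd) (by omega), mem_univ _⟩
  · have hx0 : x.val ≠ 0 := (ZMod.val_ne_zero x).mpr (ne_of_mem_erase hx)
    have := ZMod.val_lt x
    rw [mem_Icc]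
    omega
  · rw [mem_Icc] at hm
    exact ZMod.val_natCast_of_lt (by omega)

lemma filter_Icc_gcd_eq_one_of_prime {p : ℕ} (hp : p.Prime) :
    (Icc 1 p).filter (fun m => Nat.gcd m p = 1) = Icc 1 (p - 1) := by
  ext m
  have := hp.two_le
  simp only [mem_filter, mem_Icc]
  constructor
  · rintro ⟨⟨h1, h2⟩, hgcd⟩
    refine ⟨h1, Nat.le_sub_one_of_lt (lt_of_le_of_ne h2 ?_)⟩
    rintro rfl
    rw [Nat.gcd_self] at hgcd
    omega
  · rintro ⟨h1, h2⟩
    refine ⟨⟨h1, by omega⟩, Nat.Coprime.symm ((hp.coprime_iff_not_dvd).mpr ?_)⟩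
    exact fun hd => absurd (Nat.le_of_dvd (by omega) hd) (by omega)

section OddPrime

variable (p : ℕ) [Fact p.Prime]

lemma Cstar_eq_sum_sub_one (a : ℤ) :
    Cstar p a = ∑ x : ZMod p, ZMod.stdAddChar ((a : ZMod p) * x ^ 2) - 1 := by
  have he (m : ℕ) : e (a * m ^ 2 / p) = ZMod.stdAddChar ((a : ZMod p) * (m : ZMod p) ^ 2) := by
    rw [show (a : ℝ) * m ^ 2 / p = ((a * m ^ 2 : ℤ) : ℝ) / p by push_cast; ring,
      e_intCast_div]
    push_cast
    rfl
  rw [Cstar, filter_Icc_gcd_eq_one_of_prime Fact.out, sum_congr rfl fun m _ => he m,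
    sum_Icc_natCast_eq_sum_erase_zero p (fun x => ZMod.stdAddChar ((a : ZMod p) * x ^ 2)),
    sum_erase_eq_sub (mem_univ 0)]
  simp

lemma Bp_eq_sum_erase_zero (h : ℤ) :
    Bp p h = ∑ a ∈ univ.erase (0 : ZMod p),
      (‖∑ x, ZMod.stdAddChar (a * x ^ 2) - 1‖ : ℂ) ^ 4
        * ZMod.stdAddChar (a * (h : ZMod p)) := by
  have he (m : ℕ) : e (m * h / p) = ZMod.stdAddChar ((m : ZMod p) * (h : ZMod p)) := by
    rw [show (m : ℝ) * h / p = ((m * h : ℤ) : ℝ) / p by push_cast; ring, e_intCast_div]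
    push_cast
    rfl
  rw [Bp, sum_congr rfl fun m _ => by rw [he m, Cstar_eq_sum_sub_one, Int.cast_natCast]]
  exact sum_Icc_natCast_eq_sum_erase_zero p fun a =>
    (‖∑ x, ZMod.stdAddChar (a * x ^ 2) - 1‖ : ℂ) ^ 4 * ZMod.stdAddChar (a * (h : ZMod p))

lemma Bp_eq_of_odd_prime (hp2 : p ≠ 2) (h : ℤ) :
    Bp p h = ((p + 1) ^ 2 + 2 * (1 + (ZMod.χ₄ p : ℂ)) * p)
          * ((if (p : ℤ) ∣ h then (p : ℂ) else 0) - 1)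
        - 2 * (1 + (ZMod.χ₄ p : ℂ)) * p * (p + 1) * legendreSym p h := by
  have hF : ringChar (ZMod p) ≠ 2 := by rwa [ZMod.ringChar_zmod_n]
  rw [Bp_eq_sum_erase_zero,
    sum_erase_zero_norm_pow_four_mul_addChar hF (ZMod.isPrimitive_stdAddChar p), ZMod.card,
    ← legendreSym.at_neg_one hp2]
  simp only [ZMod.intCast_zmod_eq_zero_iff_dvd, legendreSym, Int.cast_neg, Int.cast_one]

end OddPrime

/-- Explicit evaluation of `𝐁(p,h)` for odd primes `p`. -/
theorem Bp_eval (p : ℕ) [hp : Fact p.Prime] (hp2 : p ≠ 2) (h : ℤ) :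
    (p % 4 = 3 → ¬ (p : ℤ) ∣ h → Bp p h = -((p : ℂ) + 1) ^ 2) ∧
    (p % 4 = 1 → ¬ (p : ℤ) ∣ h →
      Bp p h = -((p : ℂ) ^ 2 + 6 * p + 1) - 4 * p * (p + 1) * (legendreSym p h : ℂ)) ∧
    (p % 4 = 3 → (p : ℤ) ∣ h → Bp p h = ((p : ℂ) - 1) * ((p : ℂ) + 1) ^ 2) ∧
    (p % 4 = 1 → (p : ℤ) ∣ h → Bp p h = ((p : ℂ) - 1) * ((p : ℂ) ^ 2 + 6 * p + 1)) := by
  have hleg (hd : (p : ℤ) ∣ h) : legendreSym p h = 0 :=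
    (legendreSym.eq_zero_iff p h).mpr ((ZMod.intCast_zmod_eq_zero_iff_dvd h p).mpr hd)
  rw [Bp_eq_of_odd_prime p hp2 h]
  refine ⟨fun h3 hd => ?_, fun h1 hd => ?_, fun h3 hd => ?_, fun h1 hd => ?_⟩
  · rw [ZMod.χ₄_nat_three_mod_four h3, if_neg hd]; push_cast; ring
  · rw [ZMod.χ₄_nat_one_mod_four h1, if_neg hd]; push_cast; ring
  · rw [ZMod.χ₄_nat_three_mod_four h3, if_pos hd, hleg hd]; push_cast; ring
  · rw [ZMod.χ₄_nat_one_mod_four h1, if_pos hd, hleg hd]; push_cast; ring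

end
end

section
/- One has 1 + Σ_{k=1}^{∞} (2^k·φ(2^k)³)^{-1} · Σ_{1 ≤ a ≤ 2^k, a odd} C*(2^k,a)²·C*(2^k,−a)·C(2^k,−a) = 4. -/
/-!
For odd `a` and `16 ∣ q = 2^k` the sum `C*(q,a)` vanishes: the reflection `m ↦ q/4 - m (mod q)`
permutes the odd residues and, as `(q/4 - m)² ≡ m² + q/2 (mod q)`, flips the sign of every term.
So only `q = 2, 4, 8` contribute. There every odd square is `1 (mod q)`, whence
`C*(q,a) = φ(q) e(a/q)`, and the complete sums `C(2,a)`, `C(4,a)`, `C(8,a)` are computed termwise;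
the three contributions are `0`, `1` and `2`.
-/

set_option autoImplicit false

open scoped Classical

noncomputable section

/-- The complete quadratic Gauss sum `C(q,a) = ∑_{x=1}^{q} e(ax²/q)`. -/
def Cfull (q : ℕ) (a : ℤ) : ℂ :=
  ∑ x ∈ Finset.Icc 1 q, e ((a : ℝ) * (x : ℝ) ^ 2 / q)

open Finset
open scoped Nat

lemma e_add (x y : ℝ) : e (x + y) = e x * e y := by
  simp [e, mul_add, Complex.exp_add]

lemma e_intCast (n : ℤ) : e n = 1 := by
  rw [e, ← Complex.exp_int_mul_two_pi_mul_I n]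
  push_cast
  ring_nf

lemma e_zero : e 0 = 1 := by exact_mod_cast e_intCast 0

lemma e_add_intCast (x : ℝ) (n : ℤ) : e (x + n) = e x := by
  rw [e_add, e_intCast, mul_one]

lemma e_mul_e_neg (x : ℝ) : e x * e (-x) = 1 := by
  rw [← e_add, add_neg_cancel, e_zero]

lemma e_half : e (1 / 2) = -1 := by
  rw [e, ← Complex.exp_pi_mul_I]
  push_cast
  ring_nf

lemma e_intCast_div_of_modEq {q : ℕ} {n n' : ℤ} (h : n ≡ n' [ZMOD q]) :
    e (n / q) = e (n' / q) := by
  obtain rfl | hq := eq_or_ne q 0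
  · simp
  obtain ⟨t, ht⟩ := (Int.modEq_iff_dvd.mp h.symm)
  have : (n : ℝ) / q = n' / q + t := by
    rw [show n = n' + q * t by omega]
    push_cast
    field_simp
  rw [this, e_add_intCast]

lemma e_div_two_of_odd {n : ℤ} (hn : Odd n) : e (n / 2) = -1 := by
  have := e_intCast_div_of_modEq (q := 2) (n' := 1) (Int.odd_iff.mp hn)
  push_cast at this
  rw [this, e_half]

lemma e_mul_sq_div_of_modEq (a : ℤ) {x r q : ℕ} (h : x ^ 2 ≡ r [MOD q]) :
    e (a * x ^ 2 / q) = e (a * r / q) := by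
  have := e_intCast_div_of_modEq ((Int.natCast_modEq_iff.mpr h).mul_left a)
  push_cast at this
  exact this

lemma e_mul_sq_div_eq_mod (a : ℤ) (x q : ℕ) :
    e (a * x ^ 2 / q) = e (a * (x ^ 2 % q : ℕ) / q) :=
  e_mul_sq_div_of_modEq a (Nat.mod_modEq _ _).symm

lemma Cfull_two (a : ℤ) : Cfull 2 a = 1 + e (a / 2) := by
  rw [Cfull, show Icc 1 2 = {1, 2} by rfl]
  simp only [e_mul_sq_div_eq_mod a _ 2]
  norm_num [e_zero]
  ring

lemma Cfull_four (a : ℤ) : Cfull 4 a = 2 + 2 * e (a / 4) := by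
  rw [Cfull, show Icc 1 4 = {1, 2, 3, 4} by rfl]
  simp only [e_mul_sq_div_eq_mod a _ 4]
  norm_num [e_zero]
  ring

lemma Cfull_eight (a : ℤ) : Cfull 8 a = 2 + 2 * e (a / 2) + 4 * e (a / 8) := by
  rw [Cfull, show Icc 1 8 = {1, 2, 3, 4, 5, 6, 7, 8} by rfl]
  simp only [e_mul_sq_div_eq_mod a _ 8]
  norm_num [e_zero, show (a : ℝ) * 4 / 8 = a / 2 by ring]
  ring

lemma sq_modEq_one_of_odd {m : ℕ} (hm : Odd m) : m ^ 2 ≡ 1 [MOD 8] := by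
  have h8 : m % 8 % 2 = 1 := by rw [Nat.mod_mod_of_dvd _ (by norm_num)]; exact Nat.odd_iff.mp hm
  have : m % 8 < 8 := Nat.mod_lt _ (by norm_num)
  rw [Nat.ModEq, Nat.pow_mod]
  interval_cases m % 8 <;> simp_all

lemma gcd_two_pow_eq_one_iff {m k : ℕ} (hk : k ≠ 0) : Nat.gcd m (2 ^ k) = 1 ↔ Odd m :=
  (Nat.coprime_pow_right_iff (Nat.pos_of_ne_zero hk) _ _).trans Nat.coprime_two_right

lemma Cstar_eq_totient_mul_e {q : ℕ} (hq : ∀ m, Nat.Coprime m q → m ^ 2 ≡ 1 [MOD q]) (a : ℤ) :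
    Cstar q a = φ q * e (a / q) := by
  have hcard : #{m ∈ Icc 1 q | Nat.gcd m q = 1} = φ q := by
    rw [← Nat.filter_coprime_Ico_eq_totient q 1, add_comm, Finset.Ico_add_one_right_eq_Icc]
    simp only [Nat.coprime_comm]
  rw [Cstar, sum_congr rfl (g := fun _ => e (a / q)), sum_const, hcard, nsmul_eq_mul]
  intro m hm
  simpa using e_mul_sq_div_of_modEq a (hq m (mem_filter.mp hm).2)

lemma Cstar_two_pow_of_le_three {k : ℕ} (hk : k ≤ 3) (a : ℤ) :
    Cstar (2 ^ k) a = φ (2 ^ k) * e (a / 2 ^ k) := by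
  suffices h : ∀ m, Nat.Coprime m (2 ^ k) → m ^ 2 ≡ 1 [MOD 2 ^ k] by
    exact_mod_cast Cstar_eq_totient_mul_e h a
  intro m hm
  obtain rfl | hk0 := eq_or_ne k 0
  · exact Nat.modEq_one
  have h8 : 2 ^ k ∣ 8 := pow_dvd_pow 2 hk
  exact (sq_modEq_one_of_odd ((gcd_two_pow_eq_one_iff hk0).mp hm)).of_dvd h8

lemma Cstar_four (a : ℤ) : Cstar 4 a = 2 * e (a / 4) := by
  have h := Cstar_two_pow_of_le_three (k := 2) (by norm_num) a
  norm_num [show φ 4 = 2 by decide] at h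
  exact h

lemma Cstar_eight (a : ℤ) : Cstar 8 a = 4 * e (a / 8) := by
  have h := Cstar_two_pow_of_le_three (k := 3) (by norm_num) a
  norm_num [show φ 8 = 4 by decide] at h
  exact h

lemma e_mul_sq_div_eq_neg_of_modEq {a : ℤ} {m m' d : ℕ} (ha : Odd a) (hm : Odd m) (hd : d ≠ 0)
    (h : (m' : ℤ) ≡ 4 * d - m [ZMOD (16 * d : ℕ)]) :
    e (a * m' ^ 2 / (16 * d : ℕ)) = -e (a * m ^ 2 / (16 * d : ℕ)) := by
  obtain ⟨r, hr⟩ := (ha.mul (Int.odd_coe_nat m |>.mpr hm)).add_one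
  obtain ⟨t, ht⟩ := h.dvd
  have hsq : a * (m' : ℤ) ^ 2 ≡ a * m ^ 2 + 8 * d [ZMOD (16 * d : ℕ)] := by
    rw [Int.modEq_iff_dvd]
    refine ⟨r - 2 * a * m * t - a * d * (1 - 4 * t) ^ 2, ?_⟩
    rw [show (m' : ℤ) = 4 * d - m - 16 * d * t by push_cast at ht; linarith]
    push_cast
    linear_combination 8 * d * hr
  have := e_intCast_div_of_modEq hsq
  push_cast at this ⊢
  rw [this, add_div, show (8 * d : ℝ) / (16 * d) = 1 / 2 by field_simp; norm_num, e_add, e_half,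
    mul_neg_one]

lemma Cstar_two_pow_eq_zero {k : ℕ} (hk : 4 ≤ k) {a : ℤ} (ha : Odd a) : Cstar (2 ^ k) a = 0 := by
  obtain ⟨d, hd⟩ : ∃ d, 2 ^ k = 16 * d := ⟨2 ^ (k - 4), by rw [← pow_sub_mul_pow 2 hk]; ring⟩
  have hd0 : d ≠ 0 := by rintro rfl; simp at hd
  have hmem : ∀ m, m ∈ {m ∈ Icc 1 (2 ^ k) | Nat.gcd m (2 ^ k) = 1} ↔
      1 ≤ m ∧ m ≤ 16 * d ∧ m % 2 = 1 := by
    intro m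
    rw [mem_filter, mem_Icc, gcd_two_pow_eq_one_iff (by omega), Nat.odd_iff, hd, and_assoc]
  -- the reflection `m ↦ 4d - m` modulo `16d`
  let g : ℕ → ℕ := fun m => if m < 4 * d then 4 * d - m else 20 * d - m
  have hg_mem : ∀ m, 1 ≤ m ∧ m ≤ 16 * d ∧ m % 2 = 1 →
      1 ≤ g m ∧ g m ≤ 16 * d ∧ g m % 2 = 1 := by
    intro m hm
    simp only [g]
    split_ifs <;> omega
  have hg_invol : ∀ m, 1 ≤ m ∧ m ≤ 16 * d ∧ m % 2 = 1 → g (g m) = m := by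
    intro m hm
    simp only [g]
    split_ifs <;> omega
  have hg_modEq : ∀ m, m ≤ 16 * d → (g m : ℤ) ≡ 4 * d - m [ZMOD (16 * d : ℕ)] := by
    intro m hm
    simp only [g]
    split_ifs with h
    · rw [Nat.cast_sub h.le]
      push_cast
      rfl
    · refine Int.modEq_iff_dvd.mpr ⟨-1, ?_⟩
      rw [Nat.cast_sub (by omega)]
      push_cast
      ring
  rw [← neg_eq_self, Cstar, ← sum_neg_distrib]
  refine sum_nbij' g g (fun m hm => ?_) (fun m hm => ?_) (fun m hm => ?_) (fun m hm => ?_)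
    (fun m hm => ?_)
  all_goals rw [hmem] at *
  · exact hg_mem m hm
  · exact hg_mem m hm
  · exact hg_invol m hm
  · exact hg_invol m hm
  · rw [hd, e_mul_sq_div_eq_neg_of_modEq ha (Nat.odd_iff.mpr hm.2.2) hd0 (hg_modEq m hm.2.1)]

def twoAdicSummand (q : ℕ) (a : ℤ) : ℂ := Cstar q a ^ 2 * Cstar q (-a) * Cfull q (-a)

def twoAdicTerm (k : ℕ) : ℂ :=
  1 / ((2 ^ k : ℂ) * (φ (2 ^ k) : ℂ) ^ 3) *
    ∑ a ∈ (Icc (1 : ℤ) (2 ^ k)).filter (fun a => a % 2 = 1), twoAdicSummand (2 ^ k) a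

lemma twoAdicSummand_two {a : ℤ} (ha : Odd a) : twoAdicSummand 2 a = 0 := by
  rw [twoAdicSummand, Cfull_two, e_div_two_of_odd ha.neg, add_neg_cancel, mul_zero]

lemma twoAdicSummand_four (a : ℤ) : twoAdicSummand 4 a = 16 * (1 + e (a / 4)) := by
  rw [twoAdicSummand, Cstar_four, Cstar_four, Cfull_four]
  push_cast
  rw [neg_div]
  linear_combination (16 * e (a / 4) + 16 * (e (a / 4) * e (-(a / 4)) + 1)) * e_mul_e_neg (a / 4)

lemma twoAdicSummand_eight {a : ℤ} (ha : Odd a) : twoAdicSummand 8 a = 256 := by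
  rw [twoAdicSummand, Cstar_eight, Cstar_eight, Cfull_eight, e_div_two_of_odd ha.neg]
  push_cast
  rw [neg_div]
  linear_combination (256 * (e (a / 8) * e (-(a / 8)) + 1)) * e_mul_e_neg (a / 8)

lemma twoAdicSummand_two_pow_eq_zero {k : ℕ} (hk : 4 ≤ k) {a : ℤ} (ha : Odd a) :
    twoAdicSummand (2 ^ k) a = 0 := by
  rw [twoAdicSummand, Cstar_two_pow_eq_zero hk ha]
  ring

lemma twoAdicTerm_eq_zero_of_four_le {k : ℕ} (hk : 4 ≤ k) : twoAdicTerm k = 0 := by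
  rw [twoAdicTerm, sum_eq_zero fun a ha => twoAdicSummand_two_pow_eq_zero hk
    (Int.odd_iff.mpr (mem_filter.mp ha).2), mul_zero]

lemma twoAdicTerm_one : twoAdicTerm 1 = 0 := by
  simp only [twoAdicTerm, pow_one]
  rw [sum_eq_zero fun a ha => twoAdicSummand_two
    (Int.odd_iff.mpr (mem_filter.mp ha).2), mul_zero]

lemma twoAdicTerm_two : twoAdicTerm 2 = 1 := by
  simp only [twoAdicTerm, Nat.reducePow, Int.reducePow]
  rw [show (Icc (1 : ℤ) 4).filter (fun a => a % 2 = 1) = {1, 3} by rfl, sum_pair (by norm_num)]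
  have h : e (3 / 4) = -e (1 / 4) := by
    rw [show (3 / 4 : ℝ) = 1 / 4 + 1 / 2 by norm_num, e_add, e_half, mul_neg_one]
  norm_num [twoAdicSummand_four, show φ 4 = 2 by decide, h]
  ring

lemma twoAdicTerm_three : twoAdicTerm 3 = 2 := by
  simp only [twoAdicTerm, Nat.reducePow, Int.reducePow]
  rw [sum_congr rfl fun a ha => twoAdicSummand_eight
    (Int.odd_iff.mpr (mem_filter.mp ha).2)]
  norm_num [show φ 8 = 4 by decide, show #{a ∈ Icc (1 : ℤ) 8 | a % 2 = 1} = 4 by rfl]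

/-- The 2-adic factor:
`1 + ∑_{k ≥ 1} (2^k φ(2^k)³)⁻¹ ∑_{a odd, 1 ≤ a ≤ 2^k} C*(2^k,a)² C*(2^k,−a) C(2^k,−a) = 4`. -/
theorem two_adic_factor_eq_four :
    1 + (∑' k : ℕ,
      (1 / ((2 ^ (k + 1) : ℂ) * ((Nat.totient (2 ^ (k + 1)) : ℂ)) ^ 3)) *
        ∑ a ∈ (Finset.Icc 1 (2 ^ (k + 1))).filter (fun a => a % 2 = 1),
          (Cstar (2 ^ (k + 1)) (a : ℤ)) ^ 2 * Cstar (2 ^ (k + 1)) (-(a : ℤ)) *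
            Cfull (2 ^ (k + 1)) (-(a : ℤ))) = 4 := by
  change 1 + ∑' k : ℕ, twoAdicTerm (k + 1) = 4
  rw [tsum_eq_sum (s := range 3) fun k hk =>
    twoAdicTerm_eq_zero_of_four_le (by rw [mem_range] at hk; omega)]
  norm_num [sum_range_succ, twoAdicTerm_one, twoAdicTerm_two, twoAdicTerm_three]

end
end
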